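/- Let A be an n×n subring matrix with diagonal (p^{e_1},...,p^{e_{n-1}},1) and I = {i : e_i ≠ 0}. If i ∈ I and j ∉ I, then a_{ij} ∈ {0,1}. -/

import Mathlib

def colSpan {n : ℕ} (A : Matrix (Fin n) (Fin n) ℤ) : AddSubgroup (Fin n → ℤ) :=
  AddSubgroup.closure (Set.range fun j => fun i => A i j)

def IsSubringOf {n : ℕ} (R : AddSubgroup (Fin n → ℤ)) : Prop :=
  (fun _ => (1 : ℤ)) ∈ R ∧ ∀ u v : Fin n → ℤ, u ∈ R → v ∈ R → u * v ∈ R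

def IsHNF {n : ℕ} (A : Matrix (Fin n) (Fin n) ℤ) : Prop :=
  (∀ i j : Fin n, (j : ℕ) < (i : ℕ) → A i j = 0) ∧
  (∀ i j : Fin n, (i : ℕ) < (j : ℕ) → 0 ≤ A i j ∧ A i j < A i i)

def IsSubringMatrix {n : ℕ} (A : Matrix (Fin n) (Fin n) ℤ) : Prop :=
  IsHNF A ∧ A.det ≠ 0 ∧ IsSubringOf (colSpan A)

def GenLE {n : ℕ} (R : AddSubgroup (Fin n → ℤ)) (k : ℕ) : Prop :=
  ∃ S : Finset ((Fin n → ℤ) ⧸ R), S.card ≤ k ∧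
    AddSubgroup.closure (S : Set ((Fin n → ℤ) ⧸ R)) = ⊤

def RankGe {n : ℕ} (R : AddSubgroup (Fin n → ℤ)) (k : ℕ) : Prop :=
  ∀ S : Finset ((Fin n → ℤ) ⧸ R),
    AddSubgroup.closure (S : Set ((Fin n → ℤ) ⧸ R)) = ⊤ → k ≤ S.card

def RankEq {n : ℕ} (R : AddSubgroup (Fin n → ℤ)) (k : ℕ) : Prop :=
  GenLE R k ∧ RankGe R k

/-! Let `v` be the `j`-th column of `A`. As the column span is a ring, `v * v - v = A *ᵥ x` for an
integer vector `x`. Solve this triangular system from the bottom row up: in row `k < j` the diagonal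
entry `p ^ e` divides `c * (c - 1)` with `c = a_{kj}` and `0 ≤ c < p ^ e` (Hermite normal form);
since `c` and `c - 1` are coprime, `c ∈ {0, 1}`, so that row of `v * v - v` vanishes and `x k = 0`.
Hence `v * v = v`. -/

open Matrix

theorem mem_colSpan_iff {n : ℕ} {A : Matrix (Fin n) (Fin n) ℤ} {w : Fin n → ℤ} :
    w ∈ colSpan A ↔ ∃ x, A *ᵥ x = w := by
  have hspan : colSpan A = (LinearMap.range A.mulVecLin).toAddSubgroup := by
    rw [range_mulVecLin, Submodule.span_int_eq_addSubgroupClosure]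
    rfl
  rw [hspan, Submodule.mem_toAddSubgroup, LinearMap.mem_range]
  rfl

theorem Int.eq_zero_or_eq_one_of_pow_dvd_mul_sub_one {p : ℤ} (hp : Prime p) {e : ℕ} {c : ℤ}
    (h0 : 0 ≤ c) (hlt : c < p ^ e) (hdvd : p ^ e ∣ c * (c - 1)) : c = 0 ∨ c = 1 := by
  by_cases hpc : p ∣ c
  · have hpc' : ¬p ∣ c - 1 := fun h => hp.not_dvd_one (by simpa using dvd_sub hpc h)
    exact .inl (Int.eq_zero_of_dvd_of_nonneg_of_lt h0 hlt (hp.pow_dvd_of_dvd_mul_right e hpc' hdvd))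
  · have hc : c ≠ 0 := by rintro rfl; exact hpc (dvd_zero p)
    have := Int.eq_zero_of_dvd_of_nonneg_of_lt (by omega) (by omega)
      (hp.pow_dvd_of_dvd_mul_left e hpc hdvd)
    exact .inr (by omega)

section Triangular

variable {ι R : Type*} [Fintype ι] [LinearOrder ι] [CommRing R] [NoZeroDivisors R]
  {A : Matrix ι ι R}

theorem Matrix.BlockTriangular.mulVec_apply_of_forall_gt_eq_zero (hA : A.BlockTriangular id)
    {x : ι → R} {k : ι} (hx : ∀ m, k < m → x m = 0) : (A *ᵥ x) k = A k k * x k := by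
  refine Finset.sum_eq_single k (fun m _ hmk => ?_) (by simp)
  rcases hmk.lt_or_gt with hm | hm
  · exact mul_eq_zero_of_left (hA hm) _
  · exact mul_eq_zero_of_right _ (hx m hm)

theorem Matrix.BlockTriangular.mulVec_eq_zero_of_dvd (hA : A.BlockTriangular id)
    (hdiag : ∀ k, A k k ≠ 0) {x : ι → R} (h : ∀ k, A k k ∣ (A *ᵥ x) k → (A *ᵥ x) k = 0) :
    A *ᵥ x = 0 := by
  suffices hx : x = 0 by rw [hx, mulVec_zero]
  funext k
  induction k using WellFoundedGT.induction with
  | _ k ih =>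
    have hrow := hA.mulVec_apply_of_forall_gt_eq_zero ih
    have hzero := h k ⟨x k, hrow⟩
    exact (mul_eq_zero.mp (hrow ▸ hzero)).resolve_left (hdiag k)

end Triangular

theorem IsHNF.blockTriangular {m : ℕ} {A : Matrix (Fin m) (Fin m) ℤ} (hA : IsHNF A) :
    A.BlockTriangular id :=
  fun k l h => hA.1 k l h

theorem IsHNF.mul_sub_one_eq_zero_of_dvd {m : ℕ} {A : Matrix (Fin m) (Fin m) ℤ} (hA : IsHNF A)
    {p : ℤ} (hp : Prime p) (hdiag : ∀ k, ∃ e : ℕ, A k k = p ^ e) {j : Fin m} (hj : A j j = 1)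
    (k : Fin m) (hdvd : A k k ∣ A k j * (A k j - 1)) : A k j * (A k j - 1) = 0 := by
  rcases lt_trichotomy j k with hjk | rfl | hkj
  · rw [hA.1 k j hjk, zero_mul]
  · rw [hj, sub_self, mul_zero]
  · obtain ⟨e, he⟩ := hdiag k
    obtain ⟨h0, hlt⟩ := hA.2 k j hkj
    rw [he] at hlt hdvd
    rcases Int.eq_zero_or_eq_one_of_pow_dvd_mul_sub_one hp h0 hlt hdvd with hc | hc <;>
      simp [hc]

theorem entry_zero_or_one_general (n p : ℕ) (hp : p.Prime)
    (A : Matrix (Fin (n + 1)) (Fin (n + 1)) ℤ) (hA : IsSubringMatrix A)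
    (e : Fin n → ℕ)
    (hdiag : ∀ i : Fin n, A i.castSucc i.castSucc = (p : ℤ) ^ e i)
    (hlast : A (Fin.last n) (Fin.last n) = 1)
    (i : Fin n)
    (j : Fin (n + 1)) (hj : ∀ t : Fin n, j = t.castSucc → e t = 0) :
    A i.castSucc j = 0 ∨ A i.castSucc j = 1 := by
  obtain ⟨hhnf, -, -, hmul⟩ := hA
  have hpZ : Prime (p : ℤ) := Nat.prime_iff_prime_int.mp hp
  have hpow : ∀ k, ∃ e' : ℕ, A k k = (p : ℤ) ^ e' := by
    intro k
    induction k using Fin.lastCases with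
    | last => exact ⟨0, by rw [hlast, pow_zero]⟩
    | cast t => exact ⟨e t, hdiag t⟩
  have hjj : A j j = 1 := by
    induction j using Fin.lastCases with
    | last => exact hlast
    | cast t => rw [hdiag t, hj t rfl, pow_zero]
  have hv : A.col j ∈ colSpan A := AddSubgroup.subset_closure ⟨j, rfl⟩
  obtain ⟨x, hx⟩ := mem_colSpan_iff.mp (sub_mem (hmul _ _ hv hv) hv)
  have hzero : A *ᵥ x = 0 := by
    refine hhnf.blockTriangular.mulVec_eq_zero_of_dvd (fun k => ?_) (fun k => ?_)
    · obtain ⟨e', he'⟩ := hpow k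
      exact he' ▸ pow_ne_zero e' hpZ.ne_zero
    · simpa only [hx, Pi.sub_apply, Pi.mul_apply, col_apply, ← mul_sub_one] using
        hhnf.mul_sub_one_eq_zero_of_dvd hpZ hpow hjj k
  have hrow : A i.castSucc j * (A i.castSucc j - 1) = 0 := by
    simpa only [Pi.sub_apply, Pi.mul_apply, Pi.zero_apply, col_apply, ← mul_sub_one] using
      congrFun (hx.symm.trans hzero) i.castSucc
  rcases mul_eq_zero.mp hrow with h | h
  · exact .inl h
  · exact .inr (sub_eq_zero.mp h)

theorem entry_zero_or_one (n p : ℕ) (hp : p.Prime)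
    (A : Matrix (Fin (n + 1)) (Fin (n + 1)) ℤ) (hA : IsSubringMatrix A)
    (e : Fin n → ℕ)
    (hdiag : ∀ i : Fin n, A i.castSucc i.castSucc = (p : ℤ) ^ e i)
    (hlast : A (Fin.last n) (Fin.last n) = 1)
    (i : Fin n) (hi : e i ≠ 0)
    (j : Fin (n + 1)) (hj : ∀ t : Fin n, j = t.castSucc → e t = 0) :
    A i.castSucc j = 0 ∨ A i.castSucc j = 1 :=
  entry_zero_or_one_general n p hp A hA e hdiag hlast i j hj
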